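/- Assume N ≥ 1, α ∈ (0,2), assumptions (A_ν), β > 1/α, and set σ := 1/α − β < 0. Then there exists a constant K depending only on N, α and μ(S^{N-1}) such that for every ρ > 0, every λ > 1, and every φ ∈ C_c³(ℝ^N): ‖L^{λ,≤ρ}φ − L'^{,≤ρ}φ‖_{L^∞(ℝ^N)} ≤ K (ρ^{2−α} + ρ^{3−α}) λ^σ (‖D²φ‖_{L^∞(ℝ^N)} + ‖∂_{x_N} D²φ‖_{L^∞(ℝ^N)}) and ‖L^{λ,≤ρ}φ − L'^{,≤ρ}φ‖_{L¹(ℝ^N)} ≤ K (ρ^{2−α} + ρ^{3−α}) λ^σ (‖D²φ‖_{L¹(ℝ^N)} + ‖∂_{x_N} D²φ‖_{L¹(ℝ^N)}). -/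

import Mathlib

open MeasureTheory Set Filter Topology
open scoped RealInnerProductSpace ENNReal

noncomputable section

/-- Euclidean space `ℝ^N`. -/
abbrev Euc (N : ℕ) : Type := EuclideanSpace ℝ (Fin N)

/-- The `i`-th coordinate unit vector of `ℝ^N`. -/
def eVec (N : ℕ) (i : Fin N) : Euc N := EuclideanSpace.single i 1

/-- Zero out the `i`-th coordinate of a vector. -/
def projC {N : ℕ} (i : Fin N) (θ : Euc N) : Euc N := θ - θ i • eVec N i

/-- Rescaled jump direction `θ' + λ^σ θ_i e_i`. -/
def shiftVec {N : ℕ} (i : Fin N) (σ lam : ℝ) (θ : Euc N) : Euc N :=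
  projC i θ + (lam ^ σ * θ i) • eVec N i

/-- Generic anisotropic Lévy operator, with jump directions transformed by `T` and
radial integration restricted to the set `s ⊆ (0,∞)`. -/
def opLT {N : ℕ} (μ : Measure (Euc N)) (α : ℝ) (s : Set ℝ) (T : Euc N → Euc N)
    (φ : Euc N → ℝ) (x : Euc N) : ℝ :=
  ∫ θ, (∫ r in s, (φ x - (φ (x + r • T θ) + φ (x - r • T θ)) / 2) / r ^ (1 + α)) ∂μ

/-- Absolute convergence (in iterated form) of the integral defining the operator. -/
def absConv {N : ℕ} (μ : Measure (Euc N)) (α : ℝ) (s : Set ℝ) (T : Euc N → Euc N)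
    (φ : Euc N → ℝ) (x : Euc N) : Prop :=
  (∀ᵐ θ ∂μ, IntegrableOn
      (fun r => (φ x - (φ (x + r • T θ) + φ (x - r • T θ)) / 2) / r ^ (1 + α)) s volume) ∧
    Integrable
      (fun θ => ∫ r in s, |(φ x - (φ (x + r • T θ) + φ (x - r • T θ)) / 2) / r ^ (1 + α)|) μ

/-- Assumptions `(A_ν)` on the spectral measure `μ`, with nondegeneracy constant `lam1`
and total mass `lam2`. -/
def Anu {N : ℕ} (μ : Measure (Euc N)) (α lam1 lam2 : ℝ) : Prop :=
  μ (Metric.sphere (0 : Euc N) 1)ᶜ = 0 ∧ μ Set.univ = ENNReal.ofReal lam2 ∧ 0 < lam1 ∧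
    ∀ ξ ∈ Metric.sphere (0 : Euc N) 1, lam1 ≤ ∫ θ, |⟪ξ, θ⟫| ^ α ∂μ

/-- Convection nonlinearity `F(r) = |r|^{q-1} r`. -/
def Fc (q r : ℝ) : ℝ := |r| ^ (q - 1) * r

/-- Laplacian as the sum of second directional derivatives along the coordinate axes. -/
def lapl {N : ℕ} (φ : Euc N → ℝ) (x : Euc N) : ℝ :=
  ∑ j : Fin N, fderiv ℝ (fun y => fderiv ℝ φ y (eVec N j)) x (eVec N j)

/-- Regularity class (i) in the definition of entropy solutions:
`u ∈ L^∞((0,∞);L¹(ℝ^N)) ∩ L^∞_loc((0,∞);L^∞(ℝ^N))`. -/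
def regQ {N : ℕ} (u : ℝ → Euc N → ℝ) : Prop :=
  (∃ C : ℝ, ∀ t ∈ Ioi (0:ℝ), Integrable (u t) ∧ (∫ x, |u t x|) ≤ C) ∧
    ∀ τ T : ℝ, 0 < τ → τ < T →
      ∃ C : ℝ, ∀ t ∈ Ioc τ T, ∀ᵐ x ∂(volume : Measure (Euc N)), |u t x| ≤ C

/-- Entropy inequality (ii) in the definition of entropy solutions, for the operator with
direction transform `T` and convection in the `i`-th coordinate direction. -/
def entropyIneqT {N : ℕ} (μ : Measure (Euc N)) (α : ℝ) (T : Euc N → Euc N) (q : ℝ)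
    (i : Fin N) (u : ℝ → Euc N → ℝ) : Prop :=
  ∀ k : ℝ, ∀ ρ > (0:ℝ), ∀ φ : ℝ × Euc N → ℝ,
    ContDiff ℝ (⊤ : ℕ∞) φ → HasCompactSupport φ → 0 ≤ φ →
    tsupport φ ⊆ Ioi (0:ℝ) ×ˢ (Set.univ : Set (Euc N)) →
      0 ≤ (∫ t in Ioi (0:ℝ), ∫ x,
              (|u t x - k| * fderiv ℝ φ (t, x) (1, 0)
                + Real.sign (u t x - k) * (Fc q (u t x) - Fc q k) *
                    fderiv ℝ φ (t, x) (0, eVec N i)))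
          - ∫ t in Ioi (0:ℝ), ∫ x,
              (Real.sign (u t x - k) * φ (t, x) * opLT μ α (Ioi ρ) T (u t) x
                + |u t x - k| * opLT μ α (Ioc 0 ρ) T (fun y => φ (t, y)) x)

/-- The initial datum `μ₀` is attained in the essential-limit sense, tested against
bounded continuous functions. -/
def initTrace {N : ℕ} (μ₀ : Measure (Euc N)) (u : ℝ → Euc N → ℝ) : Prop :=
  ∀ ψ : Euc N → ℝ, Continuous ψ → (∃ C : ℝ, ∀ x, |ψ x| ≤ C) →
    ∃ S : Set ℝ, volume S = 0 ∧
      Tendsto (fun t => ∫ x, u t x * ψ x) (𝓝[Ioi (0:ℝ) \ S] (0:ℝ)) (𝓝 (∫ x, ψ x ∂μ₀))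

/-- Entropy solution of `∂_t u + L_T u + ∂_{x_i}(F(u)) = 0` in `Q = (0,∞) × ℝ^N`
with initial datum the finite measure `μ₀`. -/
def IsEntropySolT {N : ℕ} (μ : Measure (Euc N)) (α : ℝ) (T : Euc N → Euc N) (q : ℝ)
    (i : Fin N) (μ₀ : Measure (Euc N)) (u : ℝ → Euc N → ℝ) : Prop :=
  regQ u ∧ entropyIneqT μ α T q i u ∧ initTrace μ₀ u

/-- Very weak fundamental solution with mass `M` of `∂_t U + L U = 0`. -/
def IsVWFundSol {N : ℕ} (μ : Measure (Euc N)) (α M : ℝ) (U : ℝ → Euc N → ℝ) : Prop :=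
  (∀ τ T : ℝ, 0 < τ → τ < T →
      IntegrableOn (fun p : ℝ × Euc N => U p.1 p.2 * (1 + ‖p.2‖) ^ (-(1 + α)))
        (Ioc τ T ×ˢ (Set.univ : Set (Euc N))) volume) ∧
    ∀ φ : ℝ × Euc N → ℝ, ContDiff ℝ (⊤ : ℕ∞) φ → HasCompactSupport φ →
      (∫ t in Ioi (0:ℝ), ∫ x, U t x *
          (fderiv ℝ φ (t, x) (1, 0) - opLT μ α (Ioi 0) id (fun y => φ (t, y)) x))
        + M * φ (0, 0) = 0

/-- Regularity class for entropy solutions of the regularized problem: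
`L^∞((0,∞);L¹_loc) ∩ L^∞_loc((0,∞);L^∞) ∩ L²_loc((0,∞);H¹_loc)`. -/
def regQeps {N : ℕ} (u : ℝ → Euc N → ℝ) : Prop :=
  (∀ R > (0:ℝ), ∃ C : ℝ, ∀ t ∈ Ioi (0:ℝ), (∫ x in Metric.ball (0 : Euc N) R, |u t x|) ≤ C) ∧
    (∀ τ T : ℝ, 0 < τ → τ < T →
      ∃ C : ℝ, ∀ t ∈ Ioc τ T, ∀ᵐ x ∂(volume : Measure (Euc N)), |u t x| ≤ C) ∧
    ∀ τ T : ℝ, 0 < τ → τ < T → ∀ R > (0:ℝ),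
      (∀ t ∈ Ioc τ T, ∀ᵐ x ∂(volume : Measure (Euc N)), DifferentiableAt ℝ (u t) x) ∧
        IntegrableOn (fun p : ℝ × Euc N => (u p.1 p.2) ^ 2 + ‖gradient (u p.1) p.2‖ ^ 2)
          (Ioc τ T ×ˢ Metric.ball (0 : Euc N) R) volume

/-- Entropy inequality for the regularized problem `∂_t u + L u + ∂_{x_i}(F(u)) = ε Δu`
with `L¹ ∩ L^∞` initial datum `u₀`. -/
def entropyIneqReg {N : ℕ} (μ : Measure (Euc N)) (α ε q : ℝ) (i : Fin N)
    (u₀ : Euc N → ℝ) (u : ℝ → Euc N → ℝ) : Prop :=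
  ∀ k : ℝ, ∀ ρ > (0:ℝ), ∀ φ : ℝ × Euc N → ℝ,
    ContDiff ℝ (⊤ : ℕ∞) φ → HasCompactSupport φ → 0 ≤ φ →
      0 ≤ (∫ t in Ioi (0:ℝ), ∫ x,
              (|u t x - k| * fderiv ℝ φ (t, x) (1, 0)
                + Real.sign (u t x - k) * (Fc q (u t x) - Fc q k) *
                    fderiv ℝ φ (t, x) (0, eVec N i)
                + ε * |u t x - k| * lapl (fun y => φ (t, y)) x))
          - (∫ t in Ioi (0:ℝ), ∫ x,
              (Real.sign (u t x - k) * φ (t, x) * opLT μ α (Ioi ρ) id (u t) x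
                + |u t x - k| * opLT μ α (Ioc 0 ρ) id (fun y => φ (t, y)) x))
          + ∫ x, |u₀ x - k| * φ (0, x)

/-- Entropy solution of the regularized problem. -/
def IsEntropySolReg {N : ℕ} (μ : Measure (Euc N)) (α ε q : ℝ) (i : Fin N)
    (u₀ : Euc N → ℝ) (u : ℝ → Euc N → ℝ) : Prop :=
  regQeps u ∧ entropyIneqReg μ α ε q i u₀ u

/-- `C_b^∞` smoothness on `Q = (0,∞) × ℝ^N`: smooth with all derivatives bounded. -/
def CbSmoothQ {N : ℕ} (u : ℝ → Euc N → ℝ) : Prop :=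
  ContDiffOn ℝ (⊤ : ℕ∞) (fun p : ℝ × Euc N => u p.1 p.2)
      (Ioi (0:ℝ) ×ˢ (Set.univ : Set (Euc N))) ∧
    ∀ n : ℕ, ∃ C : ℝ, ∀ p ∈ Ioi (0:ℝ) ×ˢ (Set.univ : Set (Euc N)),
      ‖iteratedFDerivWithin ℝ n (fun p : ℝ × Euc N => u p.1 p.2)
          (Ioi (0:ℝ) ×ˢ (Set.univ : Set (Euc N))) p‖ ≤ C

/-- Pointwise (classical) solution of `∂_t u + L u + ∂_{x_i}(u^q) = ε Δu` on `Q`,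
the nonlocal term being given by an absolutely convergent integral. -/
def IsClassicalSolReg {N : ℕ} (μ : Measure (Euc N)) (α ε q : ℝ) (i : Fin N)
    (u : ℝ → Euc N → ℝ) : Prop :=
  ∀ t ∈ Ioi (0:ℝ), ∀ x : Euc N,
    absConv μ α (Ioi 0) id (u t) x ∧
      deriv (fun s => u s x) t + opLT μ α (Ioi 0) id (u t) x
          + fderiv ℝ (fun y => u t y ^ q) x (eVec N i) = ε * lapl (u t) x

/-- Continuity `[0,∞) → L^p_loc(ℝ^N)`. -/
def ContLploc {N : ℕ} (p : ℝ) (u : ℝ → Euc N → ℝ) : Prop :=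
  ∀ R > (0:ℝ), ∀ t₀ ∈ Ici (0:ℝ),
    Tendsto (fun t => ∫ x in Metric.ball (0 : Euc N) R, |u t x - u t₀ x| ^ p)
      (𝓝[Ici (0:ℝ)] t₀) (𝓝 0)

/-- Fourier transform with the convention `ĝ(ξ) = ∫ e^{-i x·ξ} g(x) dx`. -/
def ftc {N : ℕ} (g : Euc N → ℝ) (ξ : Euc N) : ℂ :=
  ∫ x, Complex.exp (-(Complex.I) * ((⟪x, ξ⟫ : ℝ) : ℂ)) * (g x : ℂ)

/-- `C_α = ∫_0^∞ (1 - cos t) t^{-1-α} dt`. -/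
def Calpha (α : ℝ) : ℝ := ∫ t in Ioi (0:ℝ), (1 - Real.cos t) / t ^ (1 + α)

/-- `c_{≤,α}(s) = ∫_0^s (1 - cos t) t^{-1-α} dt`. -/
def cLe (α s : ℝ) : ℝ := ∫ t in Ioc (0:ℝ) s, (1 - Real.cos t) / t ^ (1 + α)

/-- `∫ |(-Δ)^{a/2} f|²`, encoded through the Fourier transform
(with Mathlib's `e^{-2πi x·ξ}` convention, so that `(-Δ)` has symbol `(2π|ξ|)²`). -/
def fracL2sq {N : ℕ} (a : ℝ) (f : Euc N → ℝ) : ℝ :=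
  ∫ ξ : Euc N, (2 * Real.pi * ‖ξ‖) ^ (2 * a) *
    ‖VectorFourier.fourierIntegral Real.fourierChar volume (innerₗ (Euc N)) (fun x => (f x : ℂ)) ξ‖ ^ 2

/-- Append a last coordinate: `(x', s) ∈ ℝ^{n+1}`. -/
def snocE {n : ℕ} (x : Euc n) (s : ℝ) : Euc (n + 1) :=
  (EuclideanSpace.equiv (Fin (n + 1)) ℝ).symm (Fin.snoc ((EuclideanSpace.equiv (Fin n) ℝ) x) s)

/-- Drop the last coordinate: `x ∈ ℝ^{n+1} ↦ x' ∈ ℝ^n`. -/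
def dropE {n : ℕ} (x : Euc (n + 1)) : Euc n :=
  (EuclideanSpace.equiv (Fin n) ℝ).symm fun j => x j.castSucc

/-- The projection `T(σ', σ_N) = σ'/(1-σ_N²)^{1/2}` from `S^{N-1}_*` to `S^{N-2}`. -/
def Tproj (n : ℕ) (σ : Euc (n + 1)) : Euc n :=
  (EuclideanSpace.equiv (Fin n) ℝ).symm
    fun j => σ j.castSucc / Real.sqrt (1 - (σ (Fin.last n)) ^ 2)

/-- The projected spectral measure `μ̃ = T_*((1-σ_N²)^{α/2} dμ)`. -/
def muTilde (n : ℕ) (μ : Measure (Euc (n + 1))) (α : ℝ) : Measure (Euc n) :=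
  Measure.map (Tproj n)
    (μ.withDensity fun σ => ENNReal.ofReal ((1 - (σ (Fin.last n)) ^ 2) ^ (α / 2)))



namespace Stmt17Aux

variable {N : ℕ} {φ : Euc N → ℝ}

lemma contF1 (hφ : ContDiff ℝ 3 φ) : Continuous (fderiv ℝ φ) :=
  hφ.continuous_fderiv (by norm_num)

lemma cd2F1 (hφ : ContDiff ℝ 3 φ) : ContDiff ℝ 2 (fderiv ℝ φ) :=
  hφ.fderiv_right (by norm_num)

lemma contF2 (hφ : ContDiff ℝ 3 φ) : Continuous (fderiv ℝ (fderiv ℝ φ)) :=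
  (cd2F1 hφ).continuous_fderiv (by norm_num)

lemma hasDeriv_line (hφ : ContDiff ℝ 3 φ) (y v : Euc N) (s : ℝ) :
    HasDerivAt (fun t : ℝ => φ (y + t • v)) (fderiv ℝ φ (y + s • v) v) s := by
  have h1 : HasDerivAt (fun t : ℝ => y + t • v) v s := by
    simpa using ((hasDerivAt_id s).smul_const v).const_add y
  have h2 : HasFDerivAt φ (fderiv ℝ φ (y + s • v)) (y + s • v) :=
    (hφ.differentiable (by norm_num) (y + s • v)).hasFDerivAt
  exact h2.comp_hasDerivAt s h1

lemma seg_eq (hφ : ContDiff ℝ 3 φ) (y v : Euc N) :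
    φ (y + v) - φ y = ∫ s in (0:ℝ)..1, fderiv ℝ φ (y + s • v) v := by
  have hcont : Continuous fun s : ℝ => fderiv ℝ φ (y + s • v) v := by
    exact ((contF1 hφ).comp (by continuity)).clm_apply continuous_const
  have := intervalIntegral.integral_eq_sub_of_hasDerivAt
    (f := fun t : ℝ => φ (y + t • v)) (f' := fun s => fderiv ℝ φ (y + s • v) v)
    (fun s _ => hasDeriv_line hφ y v s) (hcont.intervalIntegrable 0 1)
  rw [this]
  norm_num

lemma hasDeriv_line2 (hφ : ContDiff ℝ 3 φ) (y v b : Euc N) (s : ℝ) :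
    HasDerivAt (fun t : ℝ => fderiv ℝ φ (y + t • v) b)
      (fderiv ℝ (fderiv ℝ φ) (y + s • v) v b) s := by
  have h1 : HasDerivAt (fun t : ℝ => y + t • v) v s := by
    simpa using ((hasDerivAt_id s).smul_const v).const_add y
  have h2 : HasFDerivAt (fderiv ℝ φ) (fderiv ℝ (fderiv ℝ φ) (y + s • v)) (y + s • v) :=
    ((cd2F1 hφ).differentiable (by norm_num) (y + s • v)).hasFDerivAt
  have h3 : HasDerivAt (fun t : ℝ => fderiv ℝ φ (y + t • v))
      (fderiv ℝ (fderiv ℝ φ) (y + s • v) v) s := h2.comp_hasDerivAt s h1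
  have A : (Euc N →L[ℝ] ℝ) →L[ℝ] ℝ := ContinuousLinearMap.apply ℝ ℝ b
  exact (ContinuousLinearMap.apply ℝ ℝ b).hasFDerivAt.comp_hasDerivAt s h3

lemma seg_eq2 (hφ : ContDiff ℝ 3 φ) (y v b : Euc N) :
    fderiv ℝ φ (y + v) b - fderiv ℝ φ y b
      = ∫ u in (0:ℝ)..1, fderiv ℝ (fderiv ℝ φ) (y + u • v) v b := by
  have hcont : Continuous fun u : ℝ => fderiv ℝ (fderiv ℝ φ) (y + u • v) v b := by
    exact (((contF2 hφ).comp (by continuity)).clm_apply continuous_const).clm_apply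
      continuous_const
  have := intervalIntegral.integral_eq_sub_of_hasDerivAt
    (f := fun t : ℝ => fderiv ℝ φ (y + t • v) b)
    (f' := fun u => fderiv ℝ (fderiv ℝ φ) (y + u • v) v b)
    (fun u _ => hasDeriv_line2 hφ y v b u) (hcont.intervalIntegrable 0 1)
  rw [this]
  norm_num


/-- The core function in the double-integral representation. -/
def Fker (φ : Euc N → ℝ) (x a b : Euc N) (s u : ℝ) : ℝ :=
  fderiv ℝ (fderiv ℝ φ) (x - (a + s • b) + u • ((2:ℝ) • (a + s • b)))
    ((2:ℝ) • (a + s • b)) b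

/-- The double difference. -/
def Dval (φ : Euc N → ℝ) (x a b : Euc N) : ℝ :=
  (φ (x + a + b) - φ (x + a)) + (φ (x - a - b) - φ (x - a))

lemma contFker (hφ : ContDiff ℝ 3 φ) :
    Continuous fun p : Euc N × ℝ × ℝ => Fker φ p.1 a b p.2.1 p.2.2 := by
  unfold Fker
  have h1 : Continuous fun p : Euc N × ℝ × ℝ =>
      p.1 - (a + p.2.1 • b) + p.2.2 • ((2:ℝ) • (a + p.2.1 • b)) := by fun_prop
  have h2 : Continuous fun p : Euc N × ℝ × ℝ => ((2:ℝ) • (a + p.2.1 • b) : Euc N) := by fun_prop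
  exact Continuous.clm_apply
    (Continuous.clm_apply ((contF2 hφ).comp h1) h2) continuous_const

lemma repD (hφ : ContDiff ℝ 3 φ) (x a b : Euc N) :
    Dval φ x a b = ∫ s in (0:ℝ)..1, ∫ u in (0:ℝ)..1, Fker φ x a b s u := by
  have e1 : φ (x + a + b) - φ (x + a) = ∫ s in (0:ℝ)..1, fderiv ℝ φ (x + a + s • b) b :=
    seg_eq hφ (x + a) b
  have e2 : φ (x - a - b) - φ (x - a)
      = ∫ s in (0:ℝ)..1, fderiv ℝ φ (x - a + s • (-b)) (-b) := by
    rw [sub_eq_add_neg (x - a) b]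
    exact seg_eq hφ (x - a) (-b)
  have hc1 : Continuous fun s : ℝ => fderiv ℝ φ (x + a + s • b) b :=
    ((contF1 hφ).comp (by continuity)).clm_apply continuous_const
  have hc2 : Continuous fun s : ℝ => fderiv ℝ φ (x - a + s • (-b)) (-b) :=
    ((contF1 hφ).comp (by continuity)).clm_apply continuous_const
  rw [Dval, e1, e2, ← intervalIntegral.integral_add (hc1.intervalIntegrable 0 1)
    (hc2.intervalIntegrable 0 1)]
  apply intervalIntegral.integral_congr
  intro s _
  have key : fderiv ℝ φ ((x - (a + s • b)) + ((2:ℝ) • (a + s • b))) b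
      - fderiv ℝ φ (x - (a + s • b)) b
      = ∫ u in (0:ℝ)..1, Fker φ x a b s u := seg_eq2 hφ (x - (a + s • b)) ((2:ℝ) • (a + s • b)) b
  have p1 : (x - (a + s • b)) + ((2:ℝ) • (a + s • b)) = x + a + s • b := by
    rw [two_smul]; abel
  have p2 : x - (a + s • b) = x - a + s • (-b) := by
    rw [smul_neg]; abel
  rw [p1, p2] at key
  show fderiv ℝ φ (x + a + s • b) b + fderiv ℝ φ (x - a + s • (-b)) (-b)
      = ∫ u in (0:ℝ)..1, Fker φ x a b s u
  rw [map_neg, ← key]; ring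


lemma contFker' (hφ : ContDiff ℝ 3 φ) {γ : Type*} [TopologicalSpace γ]
    {gx : γ → Euc N} {gs gu : γ → ℝ} (hgx : Continuous gx) (hgs : Continuous gs)
    (hgu : Continuous gu) :
    Continuous fun t => Fker φ (gx t) a b (gs t) (gu t) := by
  unfold Fker
  have h1 : Continuous fun t : γ =>
      gx t - (a + gs t • b) + gu t • ((2:ℝ) • (a + gs t • b)) := by fun_prop
  have h2 : Continuous fun t : γ => ((2:ℝ) • (a + gs t • b) : Euc N) := by fun_prop
  exact Continuous.clm_apply (Continuous.clm_apply ((contF2 hφ).comp h1) h2) continuous_const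

lemma f2_le (φ : Euc N → ℝ) (z v w : Euc N) :
    |fderiv ℝ (fderiv ℝ φ) z v w| ≤ ‖iteratedFDeriv ℝ 2 φ z‖ * ‖v‖ * ‖w‖ := by
  have h := iteratedFDeriv_two_apply (𝕜 := ℝ) φ z ![v, w]
  simp only [Matrix.cons_val_zero, Matrix.cons_val_one, Matrix.head_cons] at h
  calc |fderiv ℝ (fderiv ℝ φ) z v w| = ‖iteratedFDeriv ℝ 2 φ z ![v, w]‖ := by
        rw [h]; exact (Real.norm_eq_abs _).symm
    _ ≤ ‖iteratedFDeriv ℝ 2 φ z‖ * ∏ i, ‖(![v, w]) i‖ :=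
        (iteratedFDeriv ℝ 2 φ z).le_opNorm _
    _ = ‖iteratedFDeriv ℝ 2 φ z‖ * ‖v‖ * ‖w‖ := by
        simp [Fin.prod_univ_two, mul_assoc]

lemma bdd2 (hφ : ContDiff ℝ 3 φ) (hsupp : HasCompactSupport φ) :
    BddAbove (Set.range fun y => ‖iteratedFDeriv ℝ 2 φ y‖) := by
  have hc : Continuous fun y => ‖iteratedFDeriv ℝ 2 φ y‖ :=
    (hφ.continuous_iteratedFDeriv (by norm_num)).norm
  exact hc.bddAbove_range_of_hasCompactSupport (hsupp.iteratedFDeriv 2).norm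

lemma int2 (hφ : ContDiff ℝ 3 φ) (hsupp : HasCompactSupport φ) :
    Integrable (fun y => ‖iteratedFDeriv ℝ 2 φ y‖) (volume : Measure (Euc N)) :=
  ((hφ.continuous_iteratedFDeriv (by norm_num)).norm).integrable_of_hasCompactSupport
    (hsupp.iteratedFDeriv 2).norm

lemma Fker_le (hφ : ContDiff ℝ 3 φ) (x : Euc N) {s : ℝ} (u : ℝ) (hs0 : 0 ≤ s) (hs1 : s ≤ 1) :
    |Fker φ x a b s u| ≤ (2 * (‖a‖ + ‖b‖) * ‖b‖) *
      ‖iteratedFDeriv ℝ 2 φ (x - (a + s • b) + u • ((2:ℝ) • (a + s • b)))‖ := by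
  have h1 := f2_le φ (x - (a + s • b) + u • ((2:ℝ) • (a + s • b))) ((2:ℝ) • (a + s • b)) b
  have h2 : ‖((2:ℝ) • (a + s • b) : Euc N)‖ ≤ 2 * (‖a‖ + ‖b‖) := by
    rw [norm_smul]
    have : ‖a + s • b‖ ≤ ‖a‖ + ‖b‖ := by
      refine (norm_add_le _ _).trans ?_
      have : ‖s • b‖ ≤ ‖b‖ := by
        rw [norm_smul]
        have : ‖s‖ ≤ 1 := by rw [Real.norm_eq_abs, abs_of_nonneg hs0]; exact hs1
        nlinarith [norm_nonneg b]
      linarith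
    simpa using by nlinarith [this]
  set pt := x - (a + s • b) + u • ((2:ℝ) • (a + s • b))
  calc |Fker φ x a b s u| ≤ ‖iteratedFDeriv ℝ 2 φ pt‖ * ‖((2:ℝ) • (a + s • b) : Euc N)‖ * ‖b‖ := h1
    _ ≤ 2 * (‖a‖ + ‖b‖) * ‖b‖ * ‖iteratedFDeriv ℝ 2 φ pt‖ := by
        nlinarith [norm_nonneg (iteratedFDeriv ℝ 2 φ pt), norm_nonneg b,
          mul_nonneg (mul_nonneg (sub_nonneg.2 h2) (norm_nonneg (iteratedFDeriv ℝ 2 φ pt)))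
            (norm_nonneg b)]

lemma bndD (hφ : ContDiff ℝ 3 φ) (hsupp : HasCompactSupport φ) (x : Euc N) (a b : Euc N) :
    |Dval φ x a b| ≤ 2 * (‖a‖ + ‖b‖) * ‖b‖ * (⨆ y, ‖iteratedFDeriv ℝ 2 φ y‖) := by
  set M := ⨆ y : Euc N, ‖iteratedFDeriv ℝ 2 φ y‖ with hMdef
  have hMle : ∀ z : Euc N, ‖iteratedFDeriv ℝ 2 φ z‖ ≤ M := fun z =>
    le_ciSup (bdd2 hφ hsupp) z
  have hM0 : 0 ≤ M := le_trans (norm_nonneg _) (hMle 0)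
  have hb0 : (0:ℝ) ≤ 2 * (‖a‖ + ‖b‖) * ‖b‖ := by positivity
  rw [repD hφ x a b]
  have key : ∀ s ∈ Set.uIoc (0:ℝ) 1,
      ‖∫ u in (0:ℝ)..1, Fker φ x a b s u‖ ≤ 2 * (‖a‖ + ‖b‖) * ‖b‖ * M := by
    intro s hs
    rw [Set.uIoc_of_le (by norm_num : (0:ℝ) ≤ 1)] at hs
    have inner : ∀ u ∈ Set.uIoc (0:ℝ) 1, ‖Fker φ x a b s u‖ ≤ 2 * (‖a‖ + ‖b‖) * ‖b‖ * M := by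
      intro u _
      rw [Real.norm_eq_abs]
      refine (Fker_le hφ x u hs.1.le hs.2).trans ?_
      exact mul_le_mul_of_nonneg_left (hMle _) hb0
    have := intervalIntegral.norm_integral_le_of_norm_le_const
      (C := 2 * (‖a‖ + ‖b‖) * ‖b‖ * M) inner
    simpa using this
  have := intervalIntegral.norm_integral_le_of_norm_le_const
    (C := 2 * (‖a‖ + ‖b‖) * ‖b‖ * M) key
  rw [Real.norm_eq_abs] at this
  simpa using this

lemma snd_diff (hφ : ContDiff ℝ 3 φ) (hsupp : HasCompactSupport φ) (x v : Euc N) :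
    |φ x - (φ (x + v) + φ (x - v)) / 2|
      ≤ ‖v‖ * ‖v‖ * (⨆ y, ‖iteratedFDeriv ℝ 2 φ y‖) := by
  have h := bndD hφ hsupp x 0 v
  have e : Dval φ x 0 v = -(2 * (φ x - (φ (x + v) + φ (x - v)) / 2)) := by
    simp only [Dval, add_zero, sub_zero]
    ring
  rw [e] at h
  simp only [abs_neg, abs_mul, abs_two, norm_zero, zero_add] at h
  have hM0 : 0 ≤ ⨆ y : Euc N, ‖iteratedFDeriv ℝ 2 φ y‖ :=
    le_trans (norm_nonneg _) (le_ciSup (bdd2 hφ hsupp) 0)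
  nlinarith [abs_nonneg (φ x - (φ (x + v) + φ (x - v)) / 2), norm_nonneg v]

lemma ofReal_integral_abs_le {γ : Type*} [MeasurableSpace γ] (m : Measure γ) (f : γ → ℝ) :
    ENNReal.ofReal (∫ x, |f x| ∂m) ≤ ∫⁻ x, ENNReal.ofReal |f x| ∂m := by
  by_cases hf : Integrable (fun x => |f x|) m
  · rw [ofReal_integral_eq_lintegral_ofReal hf (Eventually.of_forall fun x => abs_nonneg _)]
  · rw [integral_undef hf]; simp

lemma integral_le_of_lintegral_le {γ : Type*} [MeasurableSpace γ] {m : Measure γ} {f : γ → ℝ}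
    {B : ℝ} (hB : 0 ≤ B) (h : ∫⁻ x, ENNReal.ofReal |f x| ∂m ≤ ENNReal.ofReal B) :
    ∫ x, |f x| ∂m ≤ B := by
  by_cases hf : Integrable (fun x => |f x|) m
  · have heq := ofReal_integral_eq_lintegral_ofReal hf
      (Eventually.of_forall fun x => abs_nonneg (f x))
    rw [← heq] at h
    exact (ENNReal.ofReal_le_ofReal_iff hB).mp h
  · rw [integral_undef hf]; exact hB

lemma bndD_lint (hφ : ContDiff ℝ 3 φ) (hsupp : HasCompactSupport φ) (a b : Euc N) :
    ∫⁻ x, ENNReal.ofReal |Dval φ x a b|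
      ≤ ENNReal.ofReal (2 * (‖a‖ + ‖b‖) * ‖b‖ * ∫ y, ‖iteratedFDeriv ℝ 2 φ y‖) := by
  set L1 := ∫ y : Euc N, ‖iteratedFDeriv ℝ 2 φ y‖ with hL1def
  have hL1nn : 0 ≤ L1 := integral_nonneg fun y => norm_nonneg _
  have hC0 : (0:ℝ) ≤ 2 * (‖a‖ + ‖b‖) * ‖b‖ := by positivity
  -- notation
  set ν : Measure ℝ := volume.restrict (Ioc (0:ℝ) 1) with hν
  have hν1 : ν Set.univ = 1 := by
    rw [hν, Measure.restrict_apply_univ, Real.volume_Ioc]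
    norm_num
  -- joint measurability of the kernel
  have hFmeas : ∀ {γ : Type} [MeasurableSpace γ] [TopologicalSpace γ] [BorelSpace γ]
      (gx : γ → Euc N) (gs gu : γ → ℝ), Continuous gx → Continuous gs → Continuous gu →
      Measurable fun t : γ => ENNReal.ofReal |Fker φ (gx t) a b (gs t) (gu t)| := by
    intro γ _ _ _ gx gs gu hgx hgs hgu
    exact ((contFker' hφ hgx hgs hgu).abs.measurable).ennreal_ofReal
  -- step 1 : pointwise domination by iterated lintegrals
  have step1 : ∀ x : Euc N, ENNReal.ofReal |Dval φ x a b|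
      ≤ ∫⁻ s, (∫⁻ u, ENNReal.ofReal |Fker φ x a b s u| ∂ν) ∂ν := by
    intro x
    have e1 : Dval φ x a b = ∫ s in Ioc (0:ℝ) 1, (∫ u in (0:ℝ)..1, Fker φ x a b s u) := by
      rw [repD hφ x a b, intervalIntegral.integral_of_le (by norm_num : (0:ℝ) ≤ 1)]
    have h1 : |Dval φ x a b| ≤ ∫ s in Ioc (0:ℝ) 1, |∫ u in (0:ℝ)..1, Fker φ x a b s u| := by
      rw [e1]
      simpa [Real.norm_eq_abs] using
        norm_integral_le_integral_norm (μ := ν) fun s => ∫ u in (0:ℝ)..1, Fker φ x a b s u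
    refine le_trans (ENNReal.ofReal_le_ofReal h1) ?_
    refine le_trans (ofReal_integral_abs_le ν _) ?_
    refine lintegral_mono fun s => ?_
    have e2 : ∫ u in (0:ℝ)..1, Fker φ x a b s u = ∫ u in Ioc (0:ℝ) 1, Fker φ x a b s u :=
      intervalIntegral.integral_of_le (by norm_num : (0:ℝ) ≤ 1)
    have h2 : |∫ u in (0:ℝ)..1, Fker φ x a b s u| ≤ ∫ u in Ioc (0:ℝ) 1, |Fker φ x a b s u| := by
      rw [e2]
      simpa [Real.norm_eq_abs] using
        norm_integral_le_integral_norm (μ := ν) fun u => Fker φ x a b s u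
    exact le_trans (ENNReal.ofReal_le_ofReal h2) (ofReal_integral_abs_le ν _)
  -- step 2 : bound for fixed s u
  have step2 : ∀ s ∈ Ioc (0:ℝ) 1, ∀ u : ℝ,
      (∫⁻ x, ENNReal.ofReal |Fker φ x a b s u|)
        ≤ ENNReal.ofReal (2 * (‖a‖ + ‖b‖) * ‖b‖ * L1) := by
    intro s hs u
    have hpt : ∀ x : Euc N, x - (a + s • b) + u • ((2:ℝ) • (a + s • b))
        = x + (u • ((2:ℝ) • (a + s • b)) - (a + s • b)) := by
      intro x; abel
    have hb : ∀ x : Euc N, ENNReal.ofReal |Fker φ x a b s u|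
        ≤ ENNReal.ofReal (2 * (‖a‖ + ‖b‖) * ‖b‖) * ENNReal.ofReal
            ‖iteratedFDeriv ℝ 2 φ (x + (u • ((2:ℝ) • (a + s • b)) - (a + s • b)))‖ := by
      intro x
      rw [← ENNReal.ofReal_mul hC0]
      refine ENNReal.ofReal_le_ofReal ?_
      have := Fker_le (a := a) (b := b) hφ x u hs.1.le hs.2
      rw [hpt x] at this
      exact this
    refine le_trans (lintegral_mono hb) ?_
    rw [lintegral_const_mul' _ _ ENNReal.ofReal_ne_top]
    have htr : (∫⁻ x : Euc N, ENNReal.ofReal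
        ‖iteratedFDeriv ℝ 2 φ (x + (u • ((2:ℝ) • (a + s • b)) - (a + s • b)))‖)
        = ∫⁻ x : Euc N, ENNReal.ofReal ‖iteratedFDeriv ℝ 2 φ x‖ :=
      lintegral_add_right_eq_self
        (fun x => ENNReal.ofReal ‖iteratedFDeriv ℝ 2 φ x‖) _
    rw [htr, ← ofReal_integral_eq_lintegral_ofReal (int2 hφ hsupp)
      (Eventually.of_forall fun y => norm_nonneg _)]
    rw [← ENNReal.ofReal_mul hC0]
  -- step 3 : assemble with Tonelli swaps
  calc ∫⁻ x, ENNReal.ofReal |Dval φ x a b|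
      ≤ ∫⁻ x, ∫⁻ s, (∫⁻ u, ENNReal.ofReal |Fker φ x a b s u| ∂ν) ∂ν := lintegral_mono step1
    _ = ∫⁻ s, (∫⁻ x, ∫⁻ u, ENNReal.ofReal |Fker φ x a b s u| ∂ν) ∂ν := by
        refine lintegral_lintegral_swap ?_
        refine Measurable.aemeasurable ?_
        refine Measurable.lintegral_prod_right' (f := fun p : (Euc N × ℝ) × ℝ =>
          ENNReal.ofReal |Fker φ p.1.1 a b p.1.2 p.2|) ?_
        exact hFmeas _ _ _ (by fun_prop) (by fun_prop) (by fun_prop)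
    _ = ∫⁻ s, (∫⁻ u, (∫⁻ x, ENNReal.ofReal |Fker φ x a b s u|) ∂ν) ∂ν := by
        refine lintegral_congr_ae ?_
        refine Eventually.of_forall fun s => ?_
        refine lintegral_lintegral_swap ?_
        refine Measurable.aemeasurable ?_
        exact hFmeas (fun p : Euc N × ℝ => p.1) (fun _ => s) (fun p => p.2)
          (by fun_prop) (by fun_prop) (by fun_prop)
    _ ≤ ∫⁻ _ : ℝ, ENNReal.ofReal (2 * (‖a‖ + ‖b‖) * ‖b‖ * L1) ∂ν := by
        refine lintegral_mono_ae ?_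
        rw [hν]
        refine (ae_restrict_iff' measurableSet_Ioc).mpr (Eventually.of_forall fun s hs => ?_)
        calc (∫⁻ u, (∫⁻ x, ENNReal.ofReal |Fker φ x a b s u|) ∂ν)
            ≤ ∫⁻ _ : ℝ, ENNReal.ofReal (2 * (‖a‖ + ‖b‖) * ‖b‖ * L1) ∂ν := by
              exact lintegral_mono fun u => step2 s hs u
          _ = ENNReal.ofReal (2 * (‖a‖ + ‖b‖) * ‖b‖ * L1) := by
              rw [lintegral_const, hν1, mul_one]
    _ = ENNReal.ofReal (2 * (‖a‖ + ‖b‖) * ‖b‖ * L1) := by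
        rw [lintegral_const, hν1, mul_one]

lemma rpow_ratio {r α : ℝ} (hr : 0 < r) : r * r / r ^ (1 + α) = r ^ (1 - α) := by
  rw [div_eq_iff (ne_of_gt (Real.rpow_pos_of_pos hr _)), ← Real.rpow_add hr]
  rw [show (1:ℝ) - α + (1 + α) = 2 by ring, show (2:ℝ) = ((2:ℕ):ℝ) by norm_num,
    Real.rpow_natCast]
  ring

lemma norm_eVec (i : Fin N) : ‖eVec N i‖ = 1 := by
  simp [eVec, EuclideanSpace.norm_single]

lemma abs_coord (i : Fin N) (θ : Euc N) : |θ i| ≤ ‖θ‖ := by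
  have h := abs_real_inner_le_norm (EuclideanSpace.single i (1:ℝ)) θ
  rw [EuclideanSpace.inner_single_left] at h
  simpa [EuclideanSpace.norm_single] using h

lemma norm_projC (i : Fin N) (θ : Euc N) : ‖projC i θ‖ ≤ ‖θ‖ := by
  have key : ‖projC i θ‖ ^ 2 ≤ ‖θ‖ ^ 2 := by
    rw [projC, norm_sub_sq_real]
    have h1 : ⟪θ, θ i • eVec N i⟫ = θ i * θ i := by
      rw [real_inner_smul_right, eVec, EuclideanSpace.inner_single_right]
      simp [mul_comm]
    have h2 : ‖θ i • eVec N i‖ ^ 2 = θ i * θ i := by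
      rw [norm_smul, norm_eVec]
      simp [Real.norm_eq_abs, mul_one, sq_abs, sq]
    rw [h1, h2]
    nlinarith [sq_nonneg (θ i)]
  have := Real.sqrt_le_sqrt key
  rwa [Real.sqrt_sq (norm_nonneg _), Real.sqrt_sq (norm_nonneg _)] at this

lemma contProj (i : Fin N) : Continuous (projC i (N := N)) := by
  unfold projC
  exact continuous_id.sub (((EuclideanSpace.proj i).continuous).smul continuous_const)

lemma contShift (i : Fin N) (σ lam : ℝ) : Continuous (shiftVec i σ lam (N := N)) := by
  unfold shiftVec
  exact (contProj i).add
    ((continuous_const.mul (EuclideanSpace.proj i).continuous).smul continuous_const)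

lemma measKer {α : ℝ} (hα : 0 ≤ 1 + α) (hφc : Continuous φ) {T : Euc N → Euc N}
    (hT : Continuous T) {γ : Type} [MeasurableSpace γ] [TopologicalSpace γ] [BorelSpace γ]
    {gx gθ : γ → Euc N} {gr : γ → ℝ}
    (h1 : Continuous gx) (h2 : Continuous gθ) (h3 : Continuous gr) :
    Measurable fun t : γ =>
      (φ (gx t) - (φ (gx t + gr t • T (gθ t)) + φ (gx t - gr t • T (gθ t))) / 2)
        / (gr t) ^ (1 + α) := by
  apply Measurable.div
  · have : Continuous fun t : γ =>
        φ (gx t) - (φ (gx t + gr t • T (gθ t)) + φ (gx t - gr t • T (gθ t))) / 2 := by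
      have c1 : Continuous fun t : γ => gx t + gr t • T (gθ t) := by fun_prop
      have c2 : Continuous fun t : γ => gx t - gr t • T (gθ t) := by fun_prop
      fun_prop
    exact this.measurable
  · exact ((Real.continuous_rpow_const hα).comp h3).measurable


set_option maxHeartbeats 2000000 in
lemma perTheta (hφ : ContDiff ℝ 3 φ) (hsupp : HasCompactSupport φ) {α ρ lamσ : ℝ}
    (hα0 : 0 < α) (hα2 : α < 2) (hρ : 0 < ρ) (hlampos : 0 < lamσ) (hlamle : lamσ ≤ 1)
    (p e : Euc N) (c : ℝ) (hp : ‖p‖ ≤ 1) (he : ‖e‖ = 1) (hc : |c| ≤ lamσ) :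
    ∫⁻ x : Euc N, ENNReal.ofReal
        |∫ r in Ioc (0:ℝ) ρ,
          ((φ x - (φ (x + r • (p + c • e)) + φ (x - r • (p + c • e))) / 2) / r ^ (1 + α)
            - (φ x - (φ (x + r • p) + φ (x - r • p)) / 2) / r ^ (1 + α))|
      ≤ ENNReal.ofReal ((2 * (∫ y, ‖iteratedFDeriv ℝ 2 φ y‖) * lamσ)
          * (ρ ^ (2 - α) / (2 - α))) := by
  set L1 := ∫ y : Euc N, ‖iteratedFDeriv ℝ 2 φ y‖ with hL1def
  have hL1nn : 0 ≤ L1 := integral_nonneg fun y => norm_nonneg _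
  have h2α : (0:ℝ) < 2 - α := by linarith
  have h1α : (0:ℝ) ≤ 1 + α := by linarith
  have hr_int : IntegrableOn (fun r : ℝ => r ^ (1 - α)) (Ioc 0 ρ) volume := by
    have := intervalIntegral.intervalIntegrable_rpow' (a := 0) (b := ρ)
      (by linarith : (-1:ℝ) < 1 - α)
    rwa [intervalIntegrable_iff_integrableOn_Ioc_of_le hρ.le] at this
  have hIval : ∫ r in Ioc (0:ℝ) ρ, r ^ (1 - α) = ρ ^ (2 - α) / (2 - α) := by
    rw [← intervalIntegral.integral_of_le hρ.le, integral_rpow (Or.inl (by linarith))]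
    rw [show (1:ℝ) - α + 1 = 2 - α by ring, Real.zero_rpow (ne_of_gt h2α)]
    ring
  have hrr : ∀ r : ℝ, 0 < r → r * r = r ^ (1 - α) * r ^ (1 + α) := by
    intro r hr
    have := rpow_ratio (α := α) hr
    rwa [div_eq_iff (ne_of_gt (Real.rpow_pos_of_pos hr _))] at this
  -- measurability of the difference kernel
  have hm1 : Measurable fun q : Euc N × ℝ =>
      (φ q.1 - (φ (q.1 + q.2 • (p + c • e)) + φ (q.1 - q.2 • (p + c • e))) / 2)
        / q.2 ^ (1 + α) :=
    measKer h1α hφ.continuous (T := fun _ : Euc N => p + c • e) continuous_const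
      (gx := Prod.fst) (gθ := fun _ => 0) (gr := Prod.snd)
      continuous_fst continuous_const continuous_snd
  have hm0 : Measurable fun q : Euc N × ℝ =>
      (φ q.1 - (φ (q.1 + q.2 • p) + φ (q.1 - q.2 • p)) / 2) / q.2 ^ (1 + α) :=
    measKer h1α hφ.continuous (T := fun _ : Euc N => p) continuous_const
      (gx := Prod.fst) (gθ := fun _ => 0) (gr := Prod.snd)
      continuous_fst continuous_const continuous_snd
  have hmδ : Measurable fun q : Euc N × ℝ => ENNReal.ofReal
      |(φ q.1 - (φ (q.1 + q.2 • (p + c • e)) + φ (q.1 - q.2 • (p + c • e))) / 2)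
          / q.2 ^ (1 + α)
        - (φ q.1 - (φ (q.1 + q.2 • p) + φ (q.1 - q.2 • p)) / 2) / q.2 ^ (1 + α)| :=
    ((hm1.sub hm0).abs).ennreal_ofReal
  -- step 1 : pointwise in x
  have step1 : ∀ x : Euc N, ENNReal.ofReal
      |∫ r in Ioc (0:ℝ) ρ,
        ((φ x - (φ (x + r • (p + c • e)) + φ (x - r • (p + c • e))) / 2) / r ^ (1 + α)
          - (φ x - (φ (x + r • p) + φ (x - r • p)) / 2) / r ^ (1 + α))|
      ≤ ∫⁻ r in Ioc (0:ℝ) ρ, ENNReal.ofReal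
        |((φ x - (φ (x + r • (p + c • e)) + φ (x - r • (p + c • e))) / 2) / r ^ (1 + α)
          - (φ x - (φ (x + r • p) + φ (x - r • p)) / 2) / r ^ (1 + α))| := by
    intro x
    refine le_trans (ENNReal.ofReal_le_ofReal ?_) (ofReal_integral_abs_le _ _)
    simpa [Real.norm_eq_abs] using norm_integral_le_integral_norm
      (μ := volume.restrict (Ioc (0:ℝ) ρ)) fun r =>
        ((φ x - (φ (x + r • (p + c • e)) + φ (x - r • (p + c • e))) / 2) / r ^ (1 + α)
          - (φ x - (φ (x + r • p) + φ (x - r • p)) / 2) / r ^ (1 + α))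
  -- step 2 : per-r bound after swapping
  have step2 : ∀ r : ℝ, r ∈ Ioc (0:ℝ) ρ →
      (∫⁻ x : Euc N, ENNReal.ofReal
        |((φ x - (φ (x + r • (p + c • e)) + φ (x - r • (p + c • e))) / 2) / r ^ (1 + α)
          - (φ x - (φ (x + r • p) + φ (x - r • p)) / 2) / r ^ (1 + α))|)
      ≤ ENNReal.ofReal ((2 * L1 * lamσ) * r ^ (1 - α)) := by
    intro r hr
    have hden : 0 < r ^ (1 + α) := Real.rpow_pos_of_pos hr.1 _
    have hδeq : ∀ x : Euc N,
        ((φ x - (φ (x + r • (p + c • e)) + φ (x - r • (p + c • e))) / 2) / r ^ (1 + α)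
          - (φ x - (φ (x + r • p) + φ (x - r • p)) / 2) / r ^ (1 + α))
        = -(Dval φ x (r • p) ((r * c) • e)) / (2 * r ^ (1 + α)) := by
      intro x
      rw [show r • (p + c • e) = r • p + (r * c) • e by rw [smul_add, smul_smul]]
      rw [show x + (r • p + (r * c) • e) = x + r • p + (r * c) • e from (add_assoc _ _ _).symm,
        show x - (r • p + (r * c) • e) = x - r • p - (r * c) • e from sub_add_eq_sub_sub _ _ _]
      rw [Dval]
      field_simp
      ring
    have habs : ∀ x : Euc N, ENNReal.ofReal
        |((φ x - (φ (x + r • (p + c • e)) + φ (x - r • (p + c • e))) / 2) / r ^ (1 + α)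
          - (φ x - (φ (x + r • p) + φ (x - r • p)) / 2) / r ^ (1 + α))|
        = ENNReal.ofReal ((2 * r ^ (1 + α))⁻¹) * ENNReal.ofReal |Dval φ x (r • p) ((r * c) • e)| := by
      intro x
      rw [hδeq x, abs_div, abs_neg, abs_of_pos (by linarith : (0:ℝ) < 2 * r ^ (1 + α)),
        div_eq_inv_mul, ENNReal.ofReal_mul (by positivity)]
    calc (∫⁻ x : Euc N, ENNReal.ofReal
        |((φ x - (φ (x + r • (p + c • e)) + φ (x - r • (p + c • e))) / 2) / r ^ (1 + α)
          - (φ x - (φ (x + r • p) + φ (x - r • p)) / 2) / r ^ (1 + α))|)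
        = ∫⁻ x : Euc N, ENNReal.ofReal ((2 * r ^ (1 + α))⁻¹)
            * ENNReal.ofReal |Dval φ x (r • p) ((r * c) • e)| := lintegral_congr habs
      _ = ENNReal.ofReal ((2 * r ^ (1 + α))⁻¹)
            * ∫⁻ x : Euc N, ENNReal.ofReal |Dval φ x (r • p) ((r * c) • e)| :=
          lintegral_const_mul' _ _ ENNReal.ofReal_ne_top
      _ ≤ ENNReal.ofReal ((2 * r ^ (1 + α))⁻¹)
            * ENNReal.ofReal (2 * (‖r • p‖ + ‖(r * c) • e‖) * ‖(r * c) • e‖ * L1) :=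
          mul_le_mul_right (bndD_lint hφ hsupp _ _) _
      _ = ENNReal.ofReal ((2 * r ^ (1 + α))⁻¹
            * (2 * (‖r • p‖ + ‖(r * c) • e‖) * ‖(r * c) • e‖ * L1)) :=
          (ENNReal.ofReal_mul (by positivity)).symm
      _ ≤ ENNReal.ofReal ((2 * L1 * lamσ) * r ^ (1 - α)) := by
          refine ENNReal.ofReal_le_ofReal ?_
          have hpa : ‖r • p‖ ≤ r := by
            rw [norm_smul, Real.norm_eq_abs, abs_of_pos hr.1]
            nlinarith [hr.1, norm_nonneg p]
          have hpb : ‖(r * c) • e‖ ≤ r * lamσ := by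
            rw [norm_smul, he, mul_one, Real.norm_eq_abs, abs_mul, abs_of_pos hr.1]
            nlinarith [hr.1]
          have hb0 : (0:ℝ) ≤ ‖(r * c) • e‖ := norm_nonneg _
          have ha0 : (0:ℝ) ≤ ‖r • p‖ := norm_nonneg _
          have h3 : r * lamσ ≤ r := by nlinarith [hr.1]
          have h5 : (‖r • p‖ + ‖(r * c) • e‖) * ‖(r * c) • e‖ ≤ (2 * r) * (r * lamσ) :=
            mul_le_mul (by linarith) hpb hb0 (by linarith [hr.1])
          have hkey : 2 * (‖r • p‖ + ‖(r * c) • e‖) * ‖(r * c) • e‖ * L1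
              ≤ 4 * lamσ * (r * r) * L1 := by nlinarith [hL1nn]
          have hrrr := hrr r hr.1
          have hfin : (2 * r ^ (1 + α))⁻¹ * (4 * lamσ * (r * r) * L1)
              = (2 * L1 * lamσ) * r ^ (1 - α) := by
            rw [show r * r = r ^ (1 - α) * r ^ (1 + α) from hrrr]
            field_simp
            ring
          calc (2 * r ^ (1 + α))⁻¹ * (2 * (‖r • p‖ + ‖(r * c) • e‖) * ‖(r * c) • e‖ * L1)
              ≤ (2 * r ^ (1 + α))⁻¹ * (4 * lamσ * (r * r) * L1) := by
                refine mul_le_mul_of_nonneg_left hkey (by positivity)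
            _ = (2 * L1 * lamσ) * r ^ (1 - α) := hfin
  -- assemble
  calc ∫⁻ x : Euc N, ENNReal.ofReal
        |∫ r in Ioc (0:ℝ) ρ,
          ((φ x - (φ (x + r • (p + c • e)) + φ (x - r • (p + c • e))) / 2) / r ^ (1 + α)
            - (φ x - (φ (x + r • p) + φ (x - r • p)) / 2) / r ^ (1 + α))|
      ≤ ∫⁻ x : Euc N, ∫⁻ r in Ioc (0:ℝ) ρ, ENNReal.ofReal
          |((φ x - (φ (x + r • (p + c • e)) + φ (x - r • (p + c • e))) / 2) / r ^ (1 + α)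
            - (φ x - (φ (x + r • p) + φ (x - r • p)) / 2) / r ^ (1 + α))| :=
        lintegral_mono step1
    _ = ∫⁻ r in Ioc (0:ℝ) ρ, ∫⁻ x : Euc N, ENNReal.ofReal
          |((φ x - (φ (x + r • (p + c • e)) + φ (x - r • (p + c • e))) / 2) / r ^ (1 + α)
            - (φ x - (φ (x + r • p) + φ (x - r • p)) / 2) / r ^ (1 + α))| :=
        lintegral_lintegral_swap hmδ.aemeasurable
    _ ≤ ∫⁻ r in Ioc (0:ℝ) ρ, ENNReal.ofReal ((2 * L1 * lamσ) * r ^ (1 - α)) := by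
        refine lintegral_mono_ae ?_
        refine (ae_restrict_iff' measurableSet_Ioc).mpr (Eventually.of_forall fun r hr => ?_)
        exact step2 r hr
    _ = ENNReal.ofReal ((2 * L1 * lamσ) * (ρ ^ (2 - α) / (2 - α))) := by
        rw [← ofReal_integral_eq_lintegral_ofReal (hr_int.const_mul _) ?_]
        · rw [integral_const_mul, hIval]
        · refine (ae_restrict_iff' measurableSet_Ioc).mpr (Eventually.of_forall fun r hr => ?_)
          have : (0:ℝ) ≤ r ^ (1 - α) := Real.rpow_nonneg hr.1.le _
          positivity

set_option maxHeartbeats 2000000 in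
theorem main_est (i : Fin N) {α σ lam2 ρ lam : ℝ}
    (hα0 : 0 < α) (hα2 : α < 2) (hσ : σ ≤ 0) (hlam2 : 0 ≤ lam2)
    (μ : Measure (Euc N)) (hsph : μ (Metric.sphere (0 : Euc N) 1)ᶜ = 0)
    (huniv : μ Set.univ = ENNReal.ofReal lam2)
    (hρ : 0 < ρ) (hlam : 1 < lam)
    (hφ : ContDiff ℝ 3 φ) (hsupp : HasCompactSupport φ) :
    (∀ x, |opLT μ α (Ioc 0 ρ) (shiftVec i σ lam) φ x - opLT μ α (Ioc 0 ρ) (projC i) φ x|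
        ≤ 2 * lam2 / (2 - α) * ρ ^ (2 - α) * lam ^ σ * (⨆ y, ‖iteratedFDeriv ℝ 2 φ y‖))
    ∧ (∫ x, |opLT μ α (Ioc 0 ρ) (shiftVec i σ lam) φ x - opLT μ α (Ioc 0 ρ) (projC i) φ x|)
        ≤ 2 * lam2 / (2 - α) * ρ ^ (2 - α) * lam ^ σ * (∫ y, ‖iteratedFDeriv ℝ 2 φ y‖) := by
  classical
  set M := ⨆ y : Euc N, ‖iteratedFDeriv ℝ 2 φ y‖ with hMdef
  set L1 := ∫ y : Euc N, ‖iteratedFDeriv ℝ 2 φ y‖ with hL1def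
  have hMle : ∀ z : Euc N, ‖iteratedFDeriv ℝ 2 φ z‖ ≤ M := fun z => le_ciSup (bdd2 hφ hsupp) z
  have hM0 : 0 ≤ M := le_trans (norm_nonneg _) (hMle 0)
  have hL1nn : 0 ≤ L1 := integral_nonneg fun y => norm_nonneg _
  have hlampos : 0 < lam ^ σ := Real.rpow_pos_of_pos (lt_trans one_pos hlam) σ
  have hlamle : lam ^ σ ≤ 1 := Real.rpow_le_one_of_one_le_of_nonpos hlam.le hσ
  have h2α : (0:ℝ) < 2 - α := by linarith
  have h1α : (0:ℝ) ≤ 1 + α := by linarith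
  haveI hfin : IsFiniteMeasure μ := ⟨by rw [huniv]; exact ENNReal.ofReal_lt_top⟩
  have haeθ : ∀ᵐ θ ∂μ, ‖θ‖ = 1 := by
    have h : ∀ᵐ θ ∂μ, θ ∈ Metric.sphere (0 : Euc N) 1 := by
      rw [ae_iff]
      exact hsph
    filter_upwards [h] with θ hθ
    simpa using hθ
  -- radial integrability facts
  have hr_int : IntegrableOn (fun r : ℝ => r ^ (1 - α)) (Ioc 0 ρ) volume := by
    have := intervalIntegral.intervalIntegrable_rpow' (a := 0) (b := ρ)
      (by linarith : (-1:ℝ) < 1 - α)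
    rwa [intervalIntegrable_iff_integrableOn_Ioc_of_le hρ.le] at this
  have hIval : ∫ r in Ioc (0:ℝ) ρ, r ^ (1 - α) = ρ ^ (2 - α) / (2 - α) := by
    rw [← intervalIntegral.integral_of_le hρ.le, integral_rpow (Or.inl (by linarith))]
    rw [show (1:ℝ) - α + 1 = 2 - α by ring, Real.zero_rpow (ne_of_gt h2α)]
    ring
  have hrr : ∀ r : ℝ, 0 < r → r * r = r ^ (1 - α) * r ^ (1 + α) := by
    intro r hr
    have := rpow_ratio (α := α) hr
    rwa [div_eq_iff (ne_of_gt (Real.rpow_pos_of_pos hr _))] at this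
  -- pointwise bound of the integrand in r, for a direction vector v
  have hnum : ∀ (x v : Euc N) (r : ℝ), 0 < r →
      |(φ x - (φ (x + r • v) + φ (x - r • v)) / 2) / r ^ (1 + α)|
        ≤ M * (‖v‖ * ‖v‖) * r ^ (1 - α) := by
    intro x v r hr
    have hden : 0 < r ^ (1 + α) := Real.rpow_pos_of_pos hr _
    rw [abs_div, abs_of_pos hden, div_le_iff₀ hden]
    calc |φ x - (φ (x + r • v) + φ (x - r • v)) / 2|
        ≤ ‖r • v‖ * ‖r • v‖ * M := snd_diff hφ hsupp x (r • v)
      _ = M * (‖v‖ * ‖v‖) * r ^ (1 - α) * r ^ (1 + α) := by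
          rw [norm_smul, Real.norm_eq_abs, abs_of_pos hr]
          linear_combination (M * (‖v‖ * ‖v‖)) * hrr r hr
  have radInt : ∀ x v : Euc N, IntegrableOn
      (fun r : ℝ => (φ x - (φ (x + r • v) + φ (x - r • v)) / 2) / r ^ (1 + α))
      (Ioc 0 ρ) volume := by
    intro x v
    refine Integrable.mono' (hr_int.const_mul (M * (‖v‖ * ‖v‖))) ?_ ?_
    · exact ((measKer h1α hφ.continuous (T := fun _ : Euc N => v) continuous_const
        (gx := fun _ : ℝ => x) (gθ := fun _ : ℝ => 0) (gr := id) continuous_const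
        continuous_const continuous_id).aestronglyMeasurable).restrict
    · refine (ae_restrict_iff' measurableSet_Ioc).mpr (Eventually.of_forall fun r hr => ?_)
      rw [Real.norm_eq_abs]
      exact hnum x v r hr.1
  have radBound : ∀ x v : Euc N, ‖v‖ ≤ 2 →
      |∫ r in Ioc (0:ℝ) ρ, (φ x - (φ (x + r • v) + φ (x - r • v)) / 2) / r ^ (1 + α)|
        ≤ 4 * M * (ρ ^ (2 - α) / (2 - α)) := by
    intro x v hv
    have hdom : Integrable (fun r : ℝ => (4 * M) * r ^ (1 - α))
        (volume.restrict (Ioc 0 ρ)) := hr_int.const_mul (4 * M)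
    have hb : ‖∫ r in Ioc (0:ℝ) ρ, (φ x - (φ (x + r • v) + φ (x - r • v)) / 2) / r ^ (1 + α)‖
        ≤ ∫ r in Ioc (0:ℝ) ρ, (4 * M) * r ^ (1 - α) := by
      refine norm_integral_le_of_norm_le hdom ?_
      refine (ae_restrict_iff' measurableSet_Ioc).mpr (Eventually.of_forall fun r hr => ?_)
      rw [Real.norm_eq_abs]
      refine (hnum x v r hr.1).trans ?_
      have h1 : 0 ≤ r ^ (1 - α) := Real.rpow_nonneg hr.1.le _
      have h2 : ‖v‖ * ‖v‖ ≤ 4 := by nlinarith [norm_nonneg v]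
      nlinarith [mul_nonneg (mul_nonneg (sub_nonneg.2 h2) hM0) h1]
    rw [Real.norm_eq_abs] at hb
    refine hb.trans ?_
    exact le_of_eq (by rw [integral_const_mul, hIval])
  -- direction norms
  have hT0n : ∀ θ : Euc N, ‖θ‖ = 1 → ‖projC i θ‖ ≤ 2 := by
    intro θ hθ
    have := norm_projC i θ; rw [hθ] at this; linarith
  have hT1n : ∀ θ : Euc N, ‖θ‖ = 1 → ‖shiftVec i σ lam θ‖ ≤ 2 := by
    intro θ hθ
    rw [shiftVec]
    refine (norm_add_le _ _).trans ?_
    have h1 := norm_projC i θ; rw [hθ] at h1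
    have h2 : ‖(lam ^ σ * θ i) • eVec N i‖ ≤ 1 := by
      rw [norm_smul, norm_eVec, mul_one, Real.norm_eq_abs, abs_mul, abs_of_pos hlampos]
      have h3 := abs_coord i θ; rw [hθ] at h3
      nlinarith [abs_nonneg (θ i), hlampos]
    linarith
  -- decomposition
  have hdecomp : ∀ (θ : Euc N) (r : ℝ),
      r • shiftVec i σ lam θ = r • projC i θ + (r * (lam ^ σ * θ i)) • eVec N i := by
    intro θ r; rw [shiftVec, smul_add, smul_smul]
  have hdelta : ∀ (x θ : Euc N) (r : ℝ), 0 < r →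
      (φ x - (φ (x + r • shiftVec i σ lam θ) + φ (x - r • shiftVec i σ lam θ)) / 2) / r ^ (1+α)
        - (φ x - (φ (x + r • projC i θ) + φ (x - r • projC i θ)) / 2) / r ^ (1+α)
      = -(Dval φ x (r • projC i θ) ((r * (lam ^ σ * θ i)) • eVec N i)) / (2 * r ^ (1+α)) := by
    intro x θ r hr
    have hden : 0 < r ^ (1 + α) := Real.rpow_pos_of_pos hr _
    rw [hdecomp θ r]
    rw [show x + (r • projC i θ + (r * (lam ^ σ * θ i)) • eVec N i)
        = x + r • projC i θ + (r * (lam ^ σ * θ i)) • eVec N i from (add_assoc _ _ _).symm,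
      show x - (r • projC i θ + (r * (lam ^ σ * θ i)) • eVec N i)
        = x - r • projC i θ - (r * (lam ^ σ * θ i)) • eVec N i from sub_add_eq_sub_sub _ _ _]
    rw [Dval]
    field_simp
    ring
  -- norm product bound on a, b
  have hab : ∀ θ : Euc N, ‖θ‖ = 1 → ∀ r : ℝ, 0 < r →
      2 * (‖r • projC i θ‖ + ‖(r * (lam ^ σ * θ i)) • eVec N i‖)
          * ‖(r * (lam ^ σ * θ i)) • eVec N i‖
        ≤ 4 * lam ^ σ * (r * r) := by
    intro θ hθ r hr
    have hpa : ‖r • projC i θ‖ ≤ r := by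
      rw [norm_smul, Real.norm_eq_abs, abs_of_pos hr]
      have := norm_projC i θ; rw [hθ] at this
      nlinarith
    have hpb : ‖(r * (lam ^ σ * θ i)) • eVec N i‖ ≤ r * lam ^ σ := by
      rw [norm_smul, norm_eVec, mul_one, Real.norm_eq_abs, abs_mul, abs_of_pos hr, abs_mul,
        abs_of_pos hlampos]
      have h6 := abs_coord i θ; rw [hθ] at h6
      exact mul_le_mul_of_nonneg_left (by nlinarith) hr.le
    have hb0 : (0:ℝ) ≤ ‖(r * (lam ^ σ * θ i)) • eVec N i‖ := norm_nonneg _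
    have ha0 : (0:ℝ) ≤ ‖r • projC i θ‖ := norm_nonneg _
    have h3 : r * lam ^ σ ≤ r := by nlinarith
    have h4 : ‖r • projC i θ‖ + ‖(r * (lam ^ σ * θ i)) • eVec N i‖ ≤ 2 * r := by linarith
    have h5 : (‖r • projC i θ‖ + ‖(r * (lam ^ σ * θ i)) • eVec N i‖)
        * ‖(r * (lam ^ σ * θ i)) • eVec N i‖ ≤ (2 * r) * (r * lam ^ σ) :=
      mul_le_mul h4 hpb hb0 (by linarith)
    nlinarith [h5]
  -- the pointwise Δ bound (L^∞ form)
  have hdbound : ∀ (x θ : Euc N), ‖θ‖ = 1 → ∀ r : ℝ, 0 < r →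
      |(φ x - (φ (x + r • shiftVec i σ lam θ) + φ (x - r • shiftVec i σ lam θ)) / 2) / r ^ (1+α)
        - (φ x - (φ (x + r • projC i θ) + φ (x - r • projC i θ)) / 2) / r ^ (1+α)|
      ≤ (2 * M * lam ^ σ) * r ^ (1 - α) := by
    intro x θ hθ r hr
    have hden : 0 < r ^ (1 + α) := Real.rpow_pos_of_pos hr _
    rw [hdelta x θ r hr, abs_div, abs_neg, abs_of_pos (by linarith : (0:ℝ) < 2 * r ^ (1+α)),
      div_le_iff₀ (by linarith : (0:ℝ) < 2 * r ^ (1+α))]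
    have h1 := bndD hφ hsupp x (r • projC i θ) ((r * (lam ^ σ * θ i)) • eVec N i)
    have h2 := hab θ hθ r hr
    have h3 := hrr r hr
    have h4 : 2 * (‖r • projC i θ‖ + ‖(r * (lam ^ σ * θ i)) • eVec N i‖)
        * ‖(r * (lam ^ σ * θ i)) • eVec N i‖ * M ≤ 4 * lam ^ σ * (r * r) * M :=
      mul_le_mul_of_nonneg_right h2 hM0
    refine (h1.trans h4).trans ?_
    calc 4 * lam ^ σ * (r * r) * M = 2 * M * lam ^ σ * r ^ (1 - α) * (2 * r ^ (1 + α)) := by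
          linear_combination (4 * lam ^ σ * M) * h3
      _ ≤ 2 * M * lam ^ σ * r ^ (1 - α) * (2 * r ^ (1 + α)) := le_refl _
  -- measurability of the inner integrals
  have measI : ∀ (T : Euc N → Euc N), Continuous T → ∀ x : Euc N,
      Measurable fun θ : Euc N => ∫ r in Ioc (0:ℝ) ρ,
        (φ x - (φ (x + r • T θ) + φ (x - r • T θ)) / 2) / r ^ (1 + α) := by
    intro T hT x
    have hsm : StronglyMeasurable fun p : Euc N × ℝ =>
        (φ x - (φ (x + p.2 • T p.1) + φ (x - p.2 • T p.1)) / 2) / p.2 ^ (1 + α) :=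
      (measKer h1α hφ.continuous hT (gx := fun _ : Euc N × ℝ => x) (gθ := Prod.fst)
        (gr := Prod.snd) continuous_const continuous_fst continuous_snd).stronglyMeasurable
    exact hsm.integral_prod_right'.measurable
  -- integrability over θ
  have hIint : ∀ (T : Euc N → Euc N), Continuous T → (∀ θ : Euc N, ‖θ‖ = 1 → ‖T θ‖ ≤ 2) →
      ∀ x : Euc N, Integrable (fun θ : Euc N => ∫ r in Ioc (0:ℝ) ρ,
        (φ x - (φ (x + r • T θ) + φ (x - r • T θ)) / 2) / r ^ (1 + α)) μ := by
    intro T hT hTn x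
    refine Integrable.mono' (integrable_const (4 * M * (ρ ^ (2 - α) / (2 - α))))
      ((measI T hT x).aestronglyMeasurable) ?_
    filter_upwards [haeθ] with θ hθ
    rw [Real.norm_eq_abs]
    exact radBound x (T θ) (hTn θ hθ)
  have hInt1 := hIint (shiftVec i σ lam) (contShift i σ lam) hT1n
  have hInt0 := hIint (projC i) (contProj i) hT0n
  -- the difference of the operators
  have heq : ∀ x : Euc N,
      opLT μ α (Ioc 0 ρ) (shiftVec i σ lam) φ x - opLT μ α (Ioc 0 ρ) (projC i) φ x
      = ∫ θ, ((∫ r in Ioc (0:ℝ) ρ,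
            (φ x - (φ (x + r • shiftVec i σ lam θ) + φ (x - r • shiftVec i σ lam θ)) / 2)
              / r ^ (1 + α))
          - ∫ r in Ioc (0:ℝ) ρ,
            (φ x - (φ (x + r • projC i θ) + φ (x - r • projC i θ)) / 2) / r ^ (1 + α)) ∂μ :=
    fun x => (integral_sub (hInt1 x) (hInt0 x)).symm
  have hJeq : ∀ x θ : Euc N,
      ((∫ r in Ioc (0:ℝ) ρ,
          (φ x - (φ (x + r • shiftVec i σ lam θ) + φ (x - r • shiftVec i σ lam θ)) / 2)
            / r ^ (1 + α))
        - ∫ r in Ioc (0:ℝ) ρ,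
          (φ x - (φ (x + r • projC i θ) + φ (x - r • projC i θ)) / 2) / r ^ (1 + α))
      = ∫ r in Ioc (0:ℝ) ρ,
          ((φ x - (φ (x + r • shiftVec i σ lam θ) + φ (x - r • shiftVec i σ lam θ)) / 2)
            / r ^ (1 + α)
          - (φ x - (φ (x + r • projC i θ) + φ (x - r • projC i θ)) / 2) / r ^ (1 + α)) :=
    fun x θ => (integral_sub (radInt x (shiftVec i σ lam θ)) (radInt x (projC i θ))).symm
  have hJbound : ∀ (x θ : Euc N), ‖θ‖ = 1 →
      |(∫ r in Ioc (0:ℝ) ρ,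
          (φ x - (φ (x + r • shiftVec i σ lam θ) + φ (x - r • shiftVec i σ lam θ)) / 2)
            / r ^ (1 + α))
        - ∫ r in Ioc (0:ℝ) ρ,
          (φ x - (φ (x + r • projC i θ) + φ (x - r • projC i θ)) / 2) / r ^ (1 + α)|
      ≤ 2 * M * lam ^ σ * (ρ ^ (2 - α) / (2 - α)) := by
    intro x θ hθ
    rw [hJeq x θ]
    have hdom : Integrable (fun r : ℝ => (2 * M * lam ^ σ) * r ^ (1 - α))
        (volume.restrict (Ioc 0 ρ)) := hr_int.const_mul _
    have hb : ‖∫ r in Ioc (0:ℝ) ρ,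
          ((φ x - (φ (x + r • shiftVec i σ lam θ) + φ (x - r • shiftVec i σ lam θ)) / 2)
            / r ^ (1 + α)
          - (φ x - (φ (x + r • projC i θ) + φ (x - r • projC i θ)) / 2) / r ^ (1 + α))‖
        ≤ ∫ r in Ioc (0:ℝ) ρ, (2 * M * lam ^ σ) * r ^ (1 - α) := by
      refine norm_integral_le_of_norm_le hdom ?_
      refine (ae_restrict_iff' measurableSet_Ioc).mpr (Eventually.of_forall fun r hr => ?_)
      rw [Real.norm_eq_abs]
      exact hdbound x θ hθ r hr.1
    rw [Real.norm_eq_abs] at hb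
    refine hb.trans ?_
    exact le_of_eq (by rw [integral_const_mul, hIval])
  constructor
  · -- L^∞ bound
    intro x
    rw [heq x]
    have hb : ‖∫ θ, ((∫ r in Ioc (0:ℝ) ρ,
            (φ x - (φ (x + r • shiftVec i σ lam θ) + φ (x - r • shiftVec i σ lam θ)) / 2)
              / r ^ (1 + α))
          - ∫ r in Ioc (0:ℝ) ρ,
            (φ x - (φ (x + r • projC i θ) + φ (x - r • projC i θ)) / 2) / r ^ (1 + α)) ∂μ‖
        ≤ ∫ _θ, (2 * M * lam ^ σ * (ρ ^ (2-α) / (2-α))) ∂μ := by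
      refine norm_integral_le_of_norm_le (integrable_const _) ?_
      filter_upwards [haeθ] with θ hθ
      rw [Real.norm_eq_abs]
      exact hJbound x θ hθ
    rw [Real.norm_eq_abs] at hb
    refine hb.trans ?_
    rw [integral_const, measureReal_def, huniv, ENNReal.toReal_ofReal hlam2, smul_eq_mul]
    exact le_of_eq (by field_simp)
  · -- L¹ bound
    have hB : 0 ≤ 2 * lam2 / (2 - α) * ρ ^ (2 - α) * lam ^ σ * L1 :=
      mul_nonneg (mul_nonneg (mul_nonneg (div_nonneg (by linarith) h2α.le)
        (Real.rpow_nonneg hρ.le _)) hlampos.le) hL1nn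
    refine integral_le_of_lintegral_le hB ?_
    -- measurability of J
    have hmJ1 : Measurable fun pq : Euc N × Euc N => ∫ r in Ioc (0:ℝ) ρ,
        (φ pq.1 - (φ (pq.1 + r • shiftVec i σ lam pq.2) + φ (pq.1 - r • shiftVec i σ lam pq.2))
          / 2) / r ^ (1 + α) := by
      have := (measKer h1α hφ.continuous (contShift i σ lam)
        (gx := fun q : (Euc N × Euc N) × ℝ => q.1.1) (gθ := fun q => q.1.2)
        (gr := fun q => q.2) (by fun_prop) (by fun_prop) (by fun_prop)).stronglyMeasurable
      exact this.integral_prod_right'.measurable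
    have hmJ0 : Measurable fun pq : Euc N × Euc N => ∫ r in Ioc (0:ℝ) ρ,
        (φ pq.1 - (φ (pq.1 + r • projC i pq.2) + φ (pq.1 - r • projC i pq.2)) / 2)
          / r ^ (1 + α) := by
      have := (measKer h1α hφ.continuous (contProj i)
        (gx := fun q : (Euc N × Euc N) × ℝ => q.1.1) (gθ := fun q => q.1.2)
        (gr := fun q => q.2) (by fun_prop) (by fun_prop) (by fun_prop)).stronglyMeasurable
      exact this.integral_prod_right'.measurable
    have hmJ : Measurable fun pq : Euc N × Euc N => ENNReal.ofReal
        |(∫ r in Ioc (0:ℝ) ρ,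
            (φ pq.1 - (φ (pq.1 + r • shiftVec i σ lam pq.2)
              + φ (pq.1 - r • shiftVec i σ lam pq.2)) / 2) / r ^ (1 + α))
          - ∫ r in Ioc (0:ℝ) ρ,
            (φ pq.1 - (φ (pq.1 + r • projC i pq.2) + φ (pq.1 - r • projC i pq.2)) / 2)
              / r ^ (1 + α)| := ((hmJ1.sub hmJ0).abs).ennreal_ofReal
    calc ∫⁻ x : Euc N, ENNReal.ofReal
          |opLT μ α (Ioc 0 ρ) (shiftVec i σ lam) φ x - opLT μ α (Ioc 0 ρ) (projC i) φ x|
        ≤ ∫⁻ x : Euc N, ∫⁻ θ, ENNReal.ofReal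
            |(∫ r in Ioc (0:ℝ) ρ,
                (φ x - (φ (x + r • shiftVec i σ lam θ) + φ (x - r • shiftVec i σ lam θ)) / 2)
                  / r ^ (1 + α))
              - ∫ r in Ioc (0:ℝ) ρ,
                (φ x - (φ (x + r • projC i θ) + φ (x - r • projC i θ)) / 2) / r ^ (1 + α)| ∂μ := by
          refine lintegral_mono fun x => ?_
          rw [heq x]
          refine le_trans (ENNReal.ofReal_le_ofReal ?_) (ofReal_integral_abs_le μ _)
          simpa [Real.norm_eq_abs] using norm_integral_le_integral_norm (μ := μ) fun θ =>
            ((∫ r in Ioc (0:ℝ) ρ,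
                (φ x - (φ (x + r • shiftVec i σ lam θ) + φ (x - r • shiftVec i σ lam θ)) / 2)
                  / r ^ (1 + α))
              - ∫ r in Ioc (0:ℝ) ρ,
                (φ x - (φ (x + r • projC i θ) + φ (x - r • projC i θ)) / 2) / r ^ (1 + α))
      _ = ∫⁻ θ, (∫⁻ x : Euc N, ENNReal.ofReal
            |(∫ r in Ioc (0:ℝ) ρ,
                (φ x - (φ (x + r • shiftVec i σ lam θ) + φ (x - r • shiftVec i σ lam θ)) / 2)
                  / r ^ (1 + α))
              - ∫ r in Ioc (0:ℝ) ρ,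
                (φ x - (φ (x + r • projC i θ) + φ (x - r • projC i θ)) / 2) / r ^ (1 + α)|) ∂μ :=
          lintegral_lintegral_swap hmJ.aemeasurable
      _ ≤ ∫⁻ _θ, ENNReal.ofReal ((2 * L1 * lam ^ σ) * (ρ ^ (2 - α) / (2 - α))) ∂μ := by
          refine lintegral_mono_ae ?_
          filter_upwards [haeθ] with θ hθ
          have hcong : ∀ x : Euc N, ENNReal.ofReal
              |(∫ r in Ioc (0:ℝ) ρ,
                  (φ x - (φ (x + r • shiftVec i σ lam θ) + φ (x - r • shiftVec i σ lam θ)) / 2)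
                    / r ^ (1 + α))
                - ∫ r in Ioc (0:ℝ) ρ,
                  (φ x - (φ (x + r • projC i θ) + φ (x - r • projC i θ)) / 2) / r ^ (1 + α)|
              = ENNReal.ofReal
              |∫ r in Ioc (0:ℝ) ρ,
                  ((φ x - (φ (x + r • shiftVec i σ lam θ) + φ (x - r • shiftVec i σ lam θ)) / 2)
                    / r ^ (1 + α)
                  - (φ x - (φ (x + r • projC i θ) + φ (x - r • projC i θ)) / 2) / r ^ (1 + α))| :=
            fun x => by rw [hJeq x θ]
          rw [lintegral_congr hcong]
          have hcn : |lam ^ σ * θ i| ≤ lam ^ σ := by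
            rw [abs_mul, abs_of_pos hlampos]
            have h6 := abs_coord i θ; rw [hθ] at h6
            nlinarith
          have hpn : ‖projC i θ‖ ≤ 1 := by
            have := norm_projC i θ; rw [hθ] at this; exact this
          exact perTheta hφ hsupp hα0 hα2 hρ hlampos hlamle (projC i θ) (eVec N i)
            (lam ^ σ * θ i) hpn (norm_eVec i) hcn
      _ = ENNReal.ofReal ((2 * L1 * lam ^ σ) * (ρ ^ (2 - α) / (2 - α))) * μ Set.univ :=
          lintegral_const _
      _ ≤ ENNReal.ofReal (2 * lam2 / (2 - α) * ρ ^ (2 - α) * lam ^ σ * L1) := by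
          rw [huniv, ← ENNReal.ofReal_mul (by positivity)]
          refine ENNReal.ofReal_le_ofReal (le_of_eq ?_)
          field_simp




end Stmt17Aux

/-- for `φ ∈ C_c³(ℝ^N)`, uniform bounds on `L^{λ,≤ρ}φ - L'^{,≤ρ}φ` in
`L^∞` and `L¹`, of order `(ρ^{2-α} + ρ^{3-α}) λ^σ` with `σ = 1/α - β < 0`, with a
constant `K` depending only on `N`, `α` and `μ(S^{N-1})`. -/
theorem stmt_17 (N : ℕ) (hN : 1 ≤ N) (α lam2 β : ℝ)
    (hα : α ∈ Ioo (0:ℝ) 2) (hβ : 1 / α < β) (hlam2 : 0 ≤ lam2) :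
    ∃ K : ℝ, 0 < K ∧
      ∀ (lam1 : ℝ) (μ : Measure (Euc N)), Anu μ α lam1 lam2 →
      ∀ ρ > (0:ℝ), ∀ lam > (1:ℝ),
      ∀ φ : Euc N → ℝ, ContDiff ℝ 3 φ → HasCompactSupport φ →
        (∀ x : Euc N,
          |opLT μ α (Ioc 0 ρ) (shiftVec ⟨N - 1, by omega⟩ (1 / α - β) lam) φ x
              - opLT μ α (Ioc 0 ρ) (projC ⟨N - 1, by omega⟩) φ x|
            ≤ K * (ρ ^ (2 - α) + ρ ^ (3 - α)) * lam ^ (1 / α - β) *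
              ((⨆ y : Euc N, ‖iteratedFDeriv ℝ 2 φ y‖)
                + ⨆ y : Euc N,
                    ‖fderiv ℝ (iteratedFDeriv ℝ 2 φ) y (eVec N ⟨N - 1, by omega⟩)‖)) ∧
        ((∫ x, |opLT μ α (Ioc 0 ρ) (shiftVec ⟨N - 1, by omega⟩ (1 / α - β) lam) φ x
              - opLT μ α (Ioc 0 ρ) (projC ⟨N - 1, by omega⟩) φ x|)
            ≤ K * (ρ ^ (2 - α) + ρ ^ (3 - α)) * lam ^ (1 / α - β) *
              ((∫ y, ‖iteratedFDeriv ℝ 2 φ y‖)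
                + ∫ y, ‖fderiv ℝ (iteratedFDeriv ℝ 2 φ) y (eVec N ⟨N - 1, by omega⟩)‖)) := by
  obtain ⟨hα0, hα2⟩ := hα
  have h2α : (0:ℝ) < 2 - α := by linarith
  have hσ : 1 / α - β ≤ 0 := by linarith
  refine ⟨2 * (lam2 + 1) / (2 - α), by positivity, ?_⟩
  intro lam1 μ hAnu ρ hρ lam hlam φ hφ hsupp
  obtain ⟨hsph, huniv, -, -⟩ := hAnu
  have h := Stmt17Aux.main_est (φ := φ) ⟨N - 1, by omega⟩ hα0 hα2 hσ hlam2 μ hsph huniv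
    hρ hlam hφ hsupp
  have hM0 : 0 ≤ ⨆ y : Euc N, ‖iteratedFDeriv ℝ 2 φ y‖ :=
    Real.iSup_nonneg fun y => norm_nonneg _
  have hM3 : 0 ≤ ⨆ y : Euc N, ‖fderiv ℝ (iteratedFDeriv ℝ 2 φ) y (eVec N ⟨N - 1, by omega⟩)‖ :=
    Real.iSup_nonneg fun y => norm_nonneg _
  have hL10 : 0 ≤ ∫ y : Euc N, ‖iteratedFDeriv ℝ 2 φ y‖ :=
    integral_nonneg fun y => norm_nonneg _
  have hL3 : 0 ≤ ∫ y : Euc N, ‖fderiv ℝ (iteratedFDeriv ℝ 2 φ) y (eVec N ⟨N - 1, by omega⟩)‖ :=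
    integral_nonneg fun y => norm_nonneg _
  have hlampos : 0 < lam ^ (1 / α - β) :=
    Real.rpow_pos_of_pos (lt_trans one_pos hlam) _
  have hρ2 : (0:ℝ) ≤ ρ ^ (2 - α) := Real.rpow_nonneg hρ.le _
  have hρ3 : (0:ℝ) ≤ ρ ^ (3 - α) := Real.rpow_nonneg hρ.le _
  have hcoef : 2 * lam2 / (2 - α) ≤ 2 * (lam2 + 1) / (2 - α) :=
    (div_le_div_iff_of_pos_right h2α).mpr (by linarith)
  constructor
  · intro x
    refine (h.1 x).trans ?_
    have := mul_le_mul
      (mul_le_mul (mul_le_mul hcoef (le_add_of_nonneg_right hρ3) hρ2 (by positivity))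
        le_rfl hlampos.le (by positivity))
      (le_add_of_nonneg_right hM3) hM0 (by positivity)
    exact this
  · refine h.2.trans ?_
    have := mul_le_mul
      (mul_le_mul (mul_le_mul hcoef (le_add_of_nonneg_right hρ3) hρ2 (by positivity))
        le_rfl hlampos.le (by positivity))
      (le_add_of_nonneg_right hL3) hL10 (by positivity)
    exact this
end
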